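/- The singular value function is submultiplicative: for all A, B ∈ ℝ^{d×d} and all s ≥ 0, φ^s(AB) ≤ φ^s(A)φ^s(B). -/

import Mathlib

open scoped BigOperators

noncomputable def svalList {n : Type*} [Fintype n] [DecidableEq n] (A : Matrix n n ℝ) : List ℝ :=
  ((Multiset.map (fun i => Real.sqrt ((Matrix.isHermitian_iff_isSymm.mpr (Matrix.isSymm_transpose_mul_self A)).eigenvalues i))
      Finset.univ.val).sort (· ≤ ·)).reverse

/-- `sval A j` is the `(j+1)`-th largest singular value `α_{j+1}(A)` (0-indexed). -/
noncomputable def sval {n : Type*} [Fintype n] [DecidableEq n] (A : Matrix n n ℝ) (j : ℕ) : ℝ :=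
  (svalList A).getD j 0

/-- The singular value function `φ^s` (with `φ^s(A) = |det A|^{s/d}` for `s > d`). -/
noncomputable def phi {d : ℕ} (s : ℝ) (A : Matrix (Fin d) (Fin d) ℝ) : ℝ :=
  if s ≤ d then
    (∏ i ∈ Finset.range ⌊s⌋₊, sval A i) *
      (if ⌊s⌋₊ < d then sval A ⌊s⌋₊ ^ (s - ⌊s⌋₊) else 1)
  else |A.det| ^ (s / (d : ℝ))

/-!
Write `P_k(A) = α₁(A)⋯α_k(A)`. Diagonalising `AᵀA = V diag(α_j²) Vᵀ` and applying the
Cauchy–Binet formula gives `det (Mᵀ AᵀA M) ≤ P_k(A)² det (MᵀM)` for every `d × k` matrix `M`,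
with equality when `M` consists of the first `k` columns of `V`. Taking that extremal `M` for
`AB` and applying the bound to `BM` and then to `M` yields `P_k(AB) ≤ P_k(A) P_k(B)`.
For `s = m + θ` with `0 ≤ θ < 1`, `φ^s = P_m^{1-θ} P_{m+1}^θ` interpolates the integer cases, and
for `s > d`, `φ^s` is a power of `|det|`, which is multiplicative.
-/

open Finset Matrix

theorem Fin.val_le_of_strictMono {k d : ℕ} {f : Fin k → Fin d} (hf : StrictMono f) (j : Fin k) :
    (j : ℕ) ≤ f j := by
  have hcard := card_le_card_of_injOn f (s := Iic j) (t := Iic (f j))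
    (fun i hi => by simpa using hf.monotone (by simpa using hi)) hf.injective.injOn
  simpa [Fin.card_Iic] using hcard

theorem mul_rpow_le_mul_rpow_of_le_of_mul_le {x a p c θ : ℝ} (hx : 0 ≤ x) (ha : 0 ≤ a)
    (hc : 0 ≤ c) (hθ₀ : 0 ≤ θ) (hθ₁ : θ ≤ 1) (h₁ : x ≤ p) (h₂ : x * a ≤ p * c) :
    x * a ^ θ ≤ p * c ^ θ := by
  rcases hx.eq_or_lt with rfl | hx
  · rw [zero_mul]; exact mul_nonneg h₁ (Real.rpow_nonneg hc θ)
  have hp := hx.trans_le h₁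
  have hfactor : ∀ {y b : ℝ}, 0 < y → 0 ≤ b → y * b ^ θ = y ^ (1 - θ) * (y * b) ^ θ := by
    intro y b hy hb
    rw [Real.mul_rpow hy.le hb, ← mul_assoc, ← Real.rpow_add hy, sub_add_cancel, Real.rpow_one]
  rw [hfactor hx ha, hfactor hp hc]
  gcongr

theorem sum_eq_sum_strictMono_comp_perm {M m : Type*} [AddCommMonoid M] [Fintype m]
    [LinearOrder m] {k : ℕ} (T : (Fin k → m) → M) (hT : ∀ g, ¬Function.Injective g → T g = 0) :
    ∑ g, T g = ∑ p : {f : Fin k → m // StrictMono f} × Equiv.Perm (Fin k), T (p.1.1 ∘ p.2) := by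
  -- An injective `g` is uniquely `f ∘ σ` with `f` strictly monotone, namely with `σ⁻¹ = sort g`.
  refine (Fintype.sum_of_injective
    (fun p : {f : Fin k → m // StrictMono f} × Equiv.Perm (Fin k) => p.1.1 ∘ p.2) ?_ _ _ ?_
    fun _ => rfl).symm
  · rintro ⟨⟨f, hf⟩, σ⟩ ⟨⟨f', hf'⟩, σ'⟩ h
    obtain rfl : f = f' := by
      rw [← hf.range_inj hf', ← EquivLike.range_comp f σ, ← EquivLike.range_comp f' σ']
      exact congrArg Set.range h
    obtain rfl : σ = σ' := Equiv.ext fun j => hf.injective (congrFun h j)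
    rfl
  · intro g hg
    refine hT g fun hinj => hg ⟨(⟨g ∘ Tuple.sort g, ?_⟩, (Tuple.sort g)⁻¹), ?_⟩
    · exact (Tuple.monotone_sort g).strictMono_of_injective (hinj.comp (Tuple.sort g).injective)
    · ext j
      simp

namespace Matrix

variable {R : Type*} [CommRing R] {m : Type*} [Fintype m] {k : ℕ}

theorem det_mul_eq_sum_prod_mul_det_submatrix (A : Matrix (Fin k) m R)
    (B : Matrix m (Fin k) R) :
    det (A * B) = ∑ g : Fin k → m, (∏ j, A j (g j)) * det (B.submatrix g id) := by
  have hrows : A * B = of fun j => ∑ i, A j i • B i := by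
    ext j j'
    simp [mul_apply]
  have hdet := (detRowAlternating (R := R) (n := Fin k)).toMultilinearMap.map_sum
    fun j i => A j i • B i
  rw [hrows]
  refine hdet.trans (Fintype.sum_congr _ _ fun g => ?_)
  exact (detRowAlternating.toMultilinearMap.map_smul_univ _ _).trans (smul_eq_mul _ _)

theorem det_mul_eq_sum_det_submatrix_mul_det_submatrix [LinearOrder m]
    (A : Matrix (Fin k) m R) (B : Matrix m (Fin k) R) :
    det (A * B) = ∑ f : {f : Fin k → m // StrictMono f},
      det (A.submatrix id f) * det (B.submatrix f id) := by
  have hperm : ∀ (f : Fin k → m) (σ : Equiv.Perm (Fin k)),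
      (∏ j, A j (f (σ j))) * det (B.submatrix (f ∘ σ) id) =
        Equiv.Perm.sign σ * (∏ j, A j (f (σ j))) * det (B.submatrix f id) := by
    intro f σ
    rw [show B.submatrix (f ∘ σ) id = (B.submatrix f id).submatrix σ id from rfl, det_permute]
    ring
  rw [det_mul_eq_sum_prod_mul_det_submatrix, sum_eq_sum_strictMono_comp_perm,
    Fintype.sum_prod_type]
  · refine Fintype.sum_congr _ _ fun f => ?_
    simp only [Function.comp_apply, hperm]
    rw [← det_transpose (A.submatrix id f), det_apply' (A.submatrix id f)ᵀ, sum_mul]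
    rfl
  · intro g hg
    obtain ⟨a, b, hab, hne⟩ := Function.not_injective_iff.mp hg
    rw [det_zero_of_row_eq hne (funext fun j => by simp [hab]), mul_zero]

theorem det_transpose_mul_diagonal_mul_le [LinearOrder R] [IsStrictOrderedRing R]
    [LinearOrder m] (M : Matrix m (Fin k) R) (μ : m → R) {c : R}
    (hc : ∀ f : Fin k → m, StrictMono f → ∏ j, μ (f j) ≤ c) :
    det (Mᵀ * diagonal μ * M) ≤ c * det (Mᵀ * M) := by
  rw [det_mul_eq_sum_det_submatrix_mul_det_submatrix (Mᵀ * diagonal μ) M,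
    det_mul_eq_sum_det_submatrix_mul_det_submatrix Mᵀ M, mul_sum]
  refine sum_le_sum fun f _ => ?_
  have hsub : (Mᵀ * diagonal μ).submatrix id f = (M.submatrix f id)ᵀ * diagonal (μ ∘ f) := by
    ext i j
    simp [mul_diagonal]
  rw [hsub, det_mul, det_transpose, det_diagonal, ← transpose_submatrix, det_transpose]
  simp only [Function.comp_apply]
  nlinarith [hc f.1 f.2, mul_self_nonneg (det (M.submatrix f id))]

end Matrix

section SingularValues

variable {d : ℕ} (A : Matrix (Fin d) (Fin d) ℝ)

theorem posSemidef_transpose_mul_self : (Aᵀ * A).PosSemidef := by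
  simpa only [conjTranspose_eq_transpose_of_trivial] using posSemidef_conjTranspose_mul_self A

noncomputable def gramEigenvalues : Fin d → ℝ := (posSemidef_transpose_mul_self A).1.eigenvalues

theorem gramEigenvalues_nonneg (i : Fin d) : 0 ≤ gramEigenvalues A i :=
  (posSemidef_transpose_mul_self A).eigenvalues_nonneg i

noncomputable def svalPerm : Equiv.Perm (Fin d) :=
  Fin.revPerm.trans (Tuple.sort fun i => √(gramEigenvalues A i))

theorem svalList_eq_ofFn :
    svalList A = List.ofFn fun j => √(gramEigenvalues A (svalPerm A j)) := by
  set sv := fun i => √(gramEigenvalues A i)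
  refine List.Perm.eq_of_pairwise' (r := (· ≥ ·)) ?_ ?_ ?_
  · exact List.pairwise_reverse.mpr (Multiset.pairwise_sort _ _)
  · refine List.pairwise_ofFn.mpr fun i j hij => Tuple.monotone_sort sv ?_
    simpa [Fin.rev_le_rev] using hij.le
  · unfold svalList
    rw [← Multiset.coe_eq_coe, Multiset.coe_reverse, Multiset.sort_eq, ← Fin.univ_val_map,
      show (fun j => sv (svalPerm A j)) = sv ∘ svalPerm A from rfl, ← Multiset.map_map,
      Multiset.map_univ_val_equiv]
    rfl

theorem sval_eq_sqrt_gramEigenvalues (j : Fin d) :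
    sval A j = √(gramEigenvalues A (svalPerm A j)) := by
  simp [sval, svalList_eq_ofFn]

theorem sval_eq_zero_of_le {j : ℕ} (hj : d ≤ j) : sval A j = 0 :=
  List.getD_eq_default _ _ (by simpa [svalList_eq_ofFn] using hj)

theorem sval_nonneg (j : ℕ) : 0 ≤ sval A j := by
  rcases lt_or_ge j d with hj | hj
  · exact (sval_eq_sqrt_gramEigenvalues A ⟨j, hj⟩).symm ▸ Real.sqrt_nonneg _
  · exact (sval_eq_zero_of_le A hj).symm ▸ le_rfl

theorem sval_antitone : Antitone (sval A) := by
  intro i j hij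
  rcases lt_or_ge j d with hj | hj
  · rw [sval_eq_sqrt_gramEigenvalues A ⟨j, hj⟩,
      sval_eq_sqrt_gramEigenvalues A ⟨i, hij.trans_lt hj⟩]
    exact Tuple.monotone_sort (fun i => √(gramEigenvalues A i))
      (Fin.rev_le_rev.mpr (Fin.mk_le_mk.mpr hij))
  · exact (sval_eq_zero_of_le A hj).symm ▸ sval_nonneg A i

theorem exists_transpose_mul_self_eq_conj_diagonal :
    ∃ V : Matrix (Fin d) (Fin d) ℝ, V * Vᵀ = 1 ∧
      Aᵀ * A = V * diagonal (fun j : Fin d => sval A j ^ 2) * Vᵀ := by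
  set hA := (posSemidef_transpose_mul_self A).1
  set U : Matrix (Fin d) (Fin d) ℝ := ↑hA.eigenvectorUnitary
  have hU : U * Uᵀ = 1 := by
    simpa only [star_eq_conjTranspose, conjTranspose_eq_transpose_of_trivial] using
      mem_unitaryGroup_iff.mp hA.eigenvectorUnitary.2
  have hspec : Aᵀ * A = U * diagonal hA.eigenvalues * Uᵀ := by
    simpa [star_eq_conjTranspose, conjTranspose_eq_transpose_of_trivial] using hA.spectral_theorem
  have hdiag : diagonal (fun j : Fin d => sval A j ^ 2) =
      (diagonal (gramEigenvalues A)).submatrix (svalPerm A) (svalPerm A) := by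
    rw [submatrix_diagonal_equiv]
    congr 1
    ext j
    rw [sval_eq_sqrt_gramEigenvalues, Real.sq_sqrt (gramEigenvalues_nonneg A _)]
    rfl
  refine ⟨U.submatrix id (svalPerm A), ?_, ?_⟩
  · rw [transpose_submatrix, submatrix_mul_equiv, hU, submatrix_id_id]
  · rw [hdiag, transpose_submatrix, submatrix_mul_equiv, submatrix_mul_equiv, submatrix_id_id]
    exact hspec

end SingularValues

section SvalProd

variable {d : ℕ} (A B : Matrix (Fin d) (Fin d) ℝ)

noncomputable def svalProd (k : ℕ) : ℝ := ∏ j ∈ range k, sval A j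

theorem svalProd_nonneg (k : ℕ) : 0 ≤ svalProd A k :=
  prod_nonneg fun j _ => sval_nonneg A j

theorem svalProd_succ (k : ℕ) : svalProd A (k + 1) = svalProd A k * sval A k :=
  prod_range_succ _ k

theorem svalProd_eq_zero_of_lt {k : ℕ} (hk : d < k) : svalProd A k = 0 :=
  prod_eq_zero (mem_range.mpr hk) (sval_eq_zero_of_le A le_rfl)

theorem svalProd_sq_eq_prod (k : ℕ) : svalProd A k ^ 2 = ∏ j : Fin k, sval A j ^ 2 := by
  rw [svalProd, ← prod_pow, Fin.prod_univ_eq_prod_range (fun j => sval A j ^ 2)]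

theorem det_transpose_mul_transpose_mul_self_mul_le {k : ℕ} (M : Matrix (Fin d) (Fin k) ℝ) :
    det (Mᵀ * (Aᵀ * A) * M) ≤ svalProd A k ^ 2 * det (Mᵀ * M) := by
  obtain ⟨V, hV, hAV⟩ := exists_transpose_mul_self_eq_conj_diagonal A
  have hconj : Mᵀ * (Aᵀ * A) * M =
      (Vᵀ * M)ᵀ * diagonal (fun j : Fin d => sval A j ^ 2) * (Vᵀ * M) := by
    simp only [hAV, transpose_mul, transpose_transpose, Matrix.mul_assoc]
  have hnorm : Mᵀ * M = (Vᵀ * M)ᵀ * (Vᵀ * M) := by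
    rw [transpose_mul, transpose_transpose, Matrix.mul_assoc, ← Matrix.mul_assoc V, hV,
      Matrix.one_mul]
  rw [hconj, hnorm]
  refine det_transpose_mul_diagonal_mul_le _ _ fun f hf => ?_
  rw [svalProd_sq_eq_prod]
  refine prod_le_prod (fun j _ => sq_nonneg _) fun j _ => ?_
  exact pow_le_pow_left₀ (sval_nonneg A _)
    (sval_antitone A (Fin.val_le_of_strictMono hf j)) 2

theorem exists_isometry_det_eq_svalProd_sq {k : ℕ} (hk : k ≤ d) :
    ∃ P : Matrix (Fin d) (Fin k) ℝ,
      Pᵀ * P = 1 ∧ det (Pᵀ * (Aᵀ * A) * P) = svalProd A k ^ 2 := by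
  obtain ⟨V, hV, hAV⟩ := exists_transpose_mul_self_eq_conj_diagonal A
  have hV' : Vᵀ * V = 1 := mul_eq_one_comm.mp hV
  set e := Fin.castLEEmb hk
  have hconj : ∀ N : Matrix (Fin d) (Fin d) ℝ,
      (V.submatrix id e)ᵀ * N * V.submatrix id e = (Vᵀ * N * V).submatrix e e := by
    intro N
    rw [submatrix_mul _ _ _ id _ Function.bijective_id, submatrix_mul _ _ _ id _
      Function.bijective_id, submatrix_id_id, transpose_submatrix]
  refine ⟨V.submatrix id e, ?_, ?_⟩
  · rw [← Matrix.mul_one (V.submatrix id e)ᵀ, hconj, Matrix.mul_one, hV',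
      submatrix_one_embedding]
  · have hdiag : Vᵀ * (Aᵀ * A) * V = diagonal (fun j : Fin d => sval A j ^ 2) := by
      rw [hAV, ← Matrix.mul_assoc, ← Matrix.mul_assoc, hV', Matrix.one_mul, Matrix.mul_assoc,
        hV', Matrix.mul_one]
    rw [hconj, hdiag, submatrix_diagonal_embedding, det_diagonal, svalProd_sq_eq_prod]
    rfl

theorem svalProd_mul_le (k : ℕ) : svalProd (A * B) k ≤ svalProd A k * svalProd B k := by
  rcases le_or_gt k d with hk | hk
  · obtain ⟨P, hP, hPAB⟩ := exists_isometry_det_eq_svalProd_sq (A * B) hk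
    have hsq : svalProd (A * B) k ^ 2 ≤ (svalProd A k * svalProd B k) ^ 2 :=
      calc svalProd (A * B) k ^ 2 = det ((B * P)ᵀ * (Aᵀ * A) * (B * P)) := by
            rw [← hPAB]; simp only [transpose_mul, Matrix.mul_assoc]
        _ ≤ svalProd A k ^ 2 * det ((B * P)ᵀ * (B * P)) :=
            det_transpose_mul_transpose_mul_self_mul_le A _
        _ = svalProd A k ^ 2 * det (Pᵀ * (Bᵀ * B) * P) := by
            simp only [transpose_mul, Matrix.mul_assoc]
        _ ≤ svalProd A k ^ 2 * (svalProd B k ^ 2 * det (Pᵀ * P)) := by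
            gcongr; exact det_transpose_mul_transpose_mul_self_mul_le B P
        _ = (svalProd A k * svalProd B k) ^ 2 := by rw [hP, det_one]; ring
    exact (pow_le_pow_iff_left₀ (svalProd_nonneg _ k)
      (mul_nonneg (svalProd_nonneg A k) (svalProd_nonneg B k)) two_ne_zero).mp hsq
  · simp only [svalProd_eq_zero_of_lt _ hk, mul_zero, le_refl]

theorem svalProd_mul_sval_rpow_mul_le (m : ℕ) {θ : ℝ} (hθ₀ : 0 ≤ θ) (hθ₁ : θ ≤ 1) :
    svalProd (A * B) m * sval (A * B) m ^ θ ≤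
      (svalProd A m * sval A m ^ θ) * (svalProd B m * sval B m ^ θ) := by
  rw [mul_mul_mul_comm, ← Real.mul_rpow (sval_nonneg A m) (sval_nonneg B m)]
  refine mul_rpow_le_mul_rpow_of_le_of_mul_le (svalProd_nonneg _ m) (sval_nonneg _ m)
    (mul_nonneg (sval_nonneg A m) (sval_nonneg B m)) hθ₀ hθ₁ (svalProd_mul_le A B m) ?_
  have h := svalProd_mul_le A B (m + 1)
  simp only [svalProd_succ] at h
  linarith

end SvalProd

/-- The singular value function is submultiplicative:
`φ^s(AB) ≤ φ^s(A)·φ^s(B)` for all `s ≥ 0`. -/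
theorem phi_submultiplicative {d : ℕ} (s : ℝ) (hs : 0 ≤ s)
    (A B : Matrix (Fin d) (Fin d) ℝ) :
    phi s (A * B) ≤ phi s A * phi s B := by
  unfold phi
  split_ifs
  · exact svalProd_mul_sval_rpow_mul_le A B ⌊s⌋₊ (by linarith [Nat.floor_le hs])
      (by linarith [Nat.lt_floor_add_one s])
  · rw [mul_one, mul_one, mul_one]
    exact svalProd_mul_le A B ⌊s⌋₊
  · rw [det_mul, abs_mul, Real.mul_rpow (abs_nonneg _) (abs_nonneg _)]
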